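/- arXiv:2104.14745 — 3 statements merged into one kernel-verified Lean document; each statement's English description precedes it below -/
import Mathlib

section
/- Let A be an orthogonal array OA(r, N, d, k) such that some N − s of its columns form a subarray with minimum Hamming distance MD ≥ k+1, and for each w = 1,…,t let B_w be a mixed orthogonal array of strength k with d rows and m_w columns of alphabet sizes d_{1w},…,d_{m_w w}, satisfying MD(B_w) ≥ 1. Then for all nonnegative integers u₁,…,u_t with 1 ≤ u₁+⋯+u_t ≤ N − s, all nonnegative integers n₁,…,n_t with 1 ≤ n₁+⋯+n_t ≤ s, and all nonnegative integers v_{iw} with v_{iw} ≤ n_w (1 ≤ w ≤ t, 1 ≤ i ≤ m_w), there exists an irredundant mixed orthogonal array IrMOA(r, N − s + Σ_{j=1}^{t}[(m_j − 1)u_j + Σ_{i=1}^{m_j} v_{ij}], d^{N−s−(u₁+⋯+u_t)}d_{11}^{u₁+v_{11}}⋯d_{m₁1}^{u₁+v_{m₁1}}⋯d_{1t}^{u_t+v_{1t}}⋯d_{m_t t}^{u_t+v_{m_t t}}, k). -/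
/-!
Keep `N - s - ∑ u` columns of `S`; for each `w`, replace each of `u w` further columns of `S` by
all columns of `B w` applied to its symbols, and replace the `e`-th of `n w` columns outside `S`
by the columns `i` of `B w` with `e < v w i`. Substituting MOAs with `d` rows for the symbols of
distinct columns of an OA preserves strength `k`: on at most `k` new columns the count factors
over the (at most `k`) original columns they come from, and within one original column it is a
count in a single `B w`. Each block replacing a column of `S` separates distinct symbols
(`MD(B w) ≥ 1`), so rows differing in `k + 1` columns of `S` still differ in `k + 1` columns.
-/

open Finset

/-- The Hamming distance between two rows of an array: the number of columns
in which the rows differ. -/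
def hamDist {ι κ : Type*} [Fintype κ] (A : ι → κ → ℕ) (i i' : ι) : ℕ :=
  (Finset.univ.filter fun j => A i j ≠ A i' j).card

/-- `MD(A)`: the minimum Hamming distance over all pairs of distinct rows. -/
noncomputable def minDist {ι κ : Type*} [Fintype κ] (A : ι → κ → ℕ) : ℕ :=
  sInf {n | ∃ i i', i ≠ i' ∧ hamDist A i i' = n}

/-- `A` is a mixed orthogonal array of strength `k` (rows indexed by `ι`,
columns by `κ`, column `j` taking values in `{0, …, lv j − 1}`): in the
subarray given by any choice of at most `k` columns, every tuple of symbols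
occurs equally often as a row, namely (number of rows)/(product of the levels
of the chosen columns) times. -/
def IsMOA {ι κ : Type*} [Fintype ι] [Fintype κ] [DecidableEq κ]
    (A : ι → κ → ℕ) (lv : κ → ℕ) (k : ℕ) : Prop :=
  (∀ i j, A i j < lv j) ∧
  ∀ S : Finset κ, S.card ≤ k → ∀ x : κ → ℕ, (∀ j ∈ S, x j < lv j) →
    (Finset.univ.filter fun i : ι => ∀ j ∈ S, A i j = x j).card * ∏ j ∈ S, lv j
      = Fintype.card ι

/-- An irredundant mixed orthogonal array of strength `k`: an MOA of strength
`k` any two distinct rows of which have Hamming distance at least `k+1`. -/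
def IsIrMOA {ι κ : Type*} [Fintype ι] [Fintype κ] [DecidableEq κ]
    (A : ι → κ → ℕ) (lv : κ → ℕ) (k : ℕ) : Prop :=
  IsMOA A lv k ∧ ∀ i i' : ι, i ≠ i' → k + 1 ≤ hamDist A i i'

/-- A difference scheme `D(r, c, d)`: an `r × c` matrix over `ℤ_d` such that
for any two distinct columns the `r` differences of corresponding entries
take each value of `ℤ_d` exactly `r/d` times. -/
def IsDiffScheme {r c d : ℕ} (B : Fin r → Fin c → ZMod d) : Prop :=
  ∀ j j' : Fin c, j ≠ j' → ∀ g : ZMod d,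
    (Finset.univ.filter fun i : Fin r => B i j - B i j' = g).card * d = r

theorem minDist_le_hamDist {ι κ : Type*} [Fintype κ] (A : ι → κ → ℕ) {i i' : ι}
    (h : i ≠ i') : minDist A ≤ hamDist A i i' :=
  Nat.sInf_le ⟨i, i', h, rfl⟩

theorem exists_ne_of_one_le_minDist {ι κ : Type*} [Fintype κ] {A : ι → κ → ℕ}
    (hA : 1 ≤ minDist A) {i i' : ι} (h : i ≠ i') : ∃ j, A i j ≠ A i' j := by
  obtain ⟨j, hj⟩ := card_pos.mp (hA.trans (minDist_le_hamDist A h))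
  exact ⟨j, (mem_filter.mp hj).2⟩

theorem hamDist_subtype {ι κ : Type*} [Fintype κ] [DecidableEq κ] (A : ι → κ → ℕ)
    (S : Finset κ) (i i' : ι) :
    hamDist (fun i (j : S) => A i j) i i' = #{j ∈ S | A i j ≠ A i' j} := by
  rw [hamDist, ← card_map (Function.Embedding.subtype _)]
  congr 1
  ext j
  simp [and_comm]

theorem card_filter_ne_le_hamDist {ι κ κ' : Type*} [Fintype κ'] [DecidableEq κ]
    {A : ι → κ → ℕ} {C : ι → κ' → ℕ} {S : Finset κ} {i i' : ι} (col : κ' → κ)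
    (h : ∀ j ∈ S, A i j ≠ A i' j → ∃ c, col c = j ∧ C i c ≠ C i' c) :
    #{j ∈ S | A i j ≠ A i' j} ≤ hamDist C i i' := by
  refine card_le_card_of_surjOn col fun j hj => ?_
  simp only [coe_filter, Set.mem_ofPred_eq] at hj
  obtain ⟨c, rfl, hc⟩ := h j hj.1 hj.2
  exact ⟨c, by simpa using hc, rfl⟩

theorem card_filter_range_eq_card_filter_fin (n : ℕ) (p : ℕ → Prop) [DecidablePred p] :
    #{a ∈ range n | p a} = #{a : Fin n | p a} := by
  rw [← card_map Fin.valEmbedding]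
  congr 1
  ext a
  simp only [mem_filter, mem_range, mem_map, mem_univ, true_and, Fin.valEmbedding_apply]
  exact ⟨fun ⟨ha, h⟩ => ⟨⟨a, ha⟩, h, rfl⟩,
    fun ⟨a, h, hv⟩ => hv ▸ ⟨a.2, h⟩⟩

namespace IsMOA

variable {ι κ : Type*} [Fintype ι] [Fintype κ] [DecidableEq κ] {A : ι → κ → ℕ}
  {lv : κ → ℕ} {k : ℕ}

theorem card_filter_forall_mem_mul_prod (hA : IsMOA A lv k) {T : Finset κ} (hT : #T ≤ k)
    (G : κ → Finset ℕ) (hG : ∀ j ∈ T, G j ⊆ range (lv j)) :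
    #{i | ∀ j ∈ T, A i j ∈ G j} * ∏ j ∈ T, lv j
      = Fintype.card ι * ∏ j ∈ T, #(G j) := by
  have hmaps : ∀ i ∈ ({i | ∀ j ∈ T, A i j ∈ G j} : Finset ι),
      (fun j (_ : j ∈ T) => A i j) ∈ T.pi G := fun i hi =>
    mem_pi.mpr (mem_filter.mp hi).2
  have hfibre : ∀ y ∈ T.pi G,
      #{i ∈ ({i | ∀ j ∈ T, A i j ∈ G j} : Finset ι) | (fun j (_ : j ∈ T) => A i j) = y}
        * ∏ j ∈ T, lv j = Fintype.card ι := by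
    intro y hy
    have hyG : ∀ j (h : j ∈ T), y j h ∈ G j := mem_pi.mp hy
    let x : κ → ℕ := fun j => if h : j ∈ T then y j h else 0
    convert hA.2 T hT x fun j hj => by simpa [x, hj] using hG j hj (hyG j hj) using 3
    ext i
    simp only [mem_filter, mem_univ, true_and, x]
    constructor
    · rintro ⟨-, rfl⟩ j hj
      simp [hj]
    · intro h
      have h' : ∀ j (hj : j ∈ T), A i j = y j hj := fun j hj => by simpa [hj] using h j hj
      exact ⟨fun j hj => h' j hj ▸ hyG j hj, funext₂ h'⟩
  rw [card_eq_sum_card_fiberwise hmaps, sum_mul, sum_congr rfl hfibre, sum_const, card_pi,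
    smul_eq_mul, mul_comm]

theorem replace_columns {κ' : Type*} [Fintype κ'] [DecidableEq κ'] (hA : IsMOA A lv k)
    (col : κ' → κ) (enc : κ' → ℕ → ℕ) (lv' : κ' → ℕ)
    (hfib : ∀ j, IsMOA (fun (a : Fin (lv j)) (c : {c // col c = j}) => enc c a) (lv' ·) k) :
    IsMOA (fun i c => enc c (A i (col c))) lv' k := by
  refine ⟨fun i c => (hfib (col c)).1 ⟨A i (col c), hA.1 i (col c)⟩ ⟨c, rfl⟩, ?_⟩
  intro T hT x hx
  let G : κ → Finset ℕ := fun j =>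
    {a ∈ range (lv j) | ∀ c ∈ T, col c = j → enc c a = x c}
  have hG : ∀ j, #(G j) * ∏ c ∈ T with col c = j, lv' c = lv j := by
    intro j
    have hj := (hfib j).2 (T.subtype (col · = j))
      (by simpa using (card_filter_le _ _).trans hT) (x ·) (by simpa using fun c _ hc => hx c hc)
    rw [Fintype.card_fin, prod_subtype_eq_prod_filter (f := lv')] at hj
    rw [card_filter_range_eq_card_filter_fin]
    convert hj using 4
    simp only [mem_subtype, Subtype.forall]
    exact forall_congr' fun c => imp.swap
  have hcount := hA.card_filter_forall_mem_mul_prod (T := T.image col) (card_image_le.trans hT) G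
    fun j _ => filter_subset _ _
  have hfilter : ({i | ∀ c ∈ T, enc c (A i (col c)) = x c} : Finset ι)
      = ({i | ∀ j ∈ T.image col, A i j ∈ G j} : Finset ι) := by
    refine Finset.ext fun i => ?_
    simp only [G, mem_filter, mem_univ, true_and, mem_range, forall_mem_image]
    exact ⟨fun h c _ => ⟨hA.1 i _, fun c' hc' hcol => hcol ▸ h c' hc'⟩,
      fun h c hc => (h hc).2 c hc rfl⟩
  have hprod : ∏ c ∈ T, lv' c = ∏ j ∈ T.image col, ∏ c ∈ T with col c = j, lv' c :=
    (prod_fiberwise_of_maps_to (fun c hc => mem_image_of_mem col hc) lv').symm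
  rcases isEmpty_or_nonempty ι with hι | ⟨⟨i₀⟩⟩
  · simp
  have hpos : 0 < ∏ j ∈ T.image col, lv j :=
    prod_pos fun j _ => (Nat.zero_le _).trans_lt (hA.1 i₀ j)
  refine Nat.eq_of_mul_eq_mul_right hpos ?_
  calc _
      = #{i | ∀ j ∈ T.image col, A i j ∈ G j} * (∏ j ∈ T.image col, lv j)
          * ∏ j ∈ T.image col, ∏ c ∈ T with col c = j, lv' c := by
        rw [hfilter, hprod]; ring
    _ = Fintype.card ι * ∏ j ∈ T.image col, (#(G j) * ∏ c ∈ T with col c = j, lv' c) := by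
        rw [hcount, prod_mul_distrib, mul_assoc]
    _ = Fintype.card ι * ∏ j ∈ T.image col, lv j := by rw [prod_congr rfl fun j _ => hG j]

theorem of_comp_injective {κ' : Type*} [Fintype κ'] [DecidableEq κ'] (hA : IsMOA A lv k)
    {A' : ι → κ' → ℕ} {lv' : κ' → ℕ} {φ : κ' → κ} (hφ : Function.Injective φ)
    (hA' : ∀ i c, A' i c = A i (φ c)) (hlv' : ∀ c, lv' c = lv (φ c)) : IsMOA A' lv' k := by
  obtain rfl : A' = fun i c => A i (φ c) := funext₂ hA'
  obtain rfl : lv' = fun c => lv (φ c) := funext hlv'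
  refine ⟨fun i c => hA.1 i (φ c), fun T hT x hx => ?_⟩
  have hx' : ∀ j ∈ T.map ⟨φ, hφ⟩, Function.extend φ x 0 j < lv j := by
    simpa [hφ.extend_apply] using hx
  convert hA.2 (T.map ⟨φ, hφ⟩) (by simpa using hT) (Function.extend φ x 0) hx' using 2
  · simp [hφ.extend_apply]
  · simp

theorem unit_column (d k : ℕ) :
    IsMOA (fun (a : Fin d) (_ : Unit) => (a : ℕ)) (fun _ => d) k := by
  refine ⟨fun a _ => a.2, fun T _ x hx => ?_⟩
  rcases T.eq_empty_or_nonempty with rfl | hT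
  · simp
  obtain rfl : T = univ := hT.eq_univ
  have hfilter : ({a | (a : ℕ) = x ()} : Finset (Fin d)) = {⟨x (), hx () (mem_univ _)⟩} := by
    ext a; simp [Fin.ext_iff]
  simp [Unique.forall_iff, hfilter]

theorem of_subsingleton_columns {d : ℕ} {κ' : Type*} [Fintype κ'] [DecidableEq κ']
    [Subsingleton κ'] {A' : Fin d → κ' → ℕ} {lv' : κ' → ℕ} (hA' : ∀ a c, A' a c = a)
    (hlv' : ∀ c, lv' c = d) : IsMOA A' lv' k :=
  (unit_column d k).of_comp_injective (φ := fun _ => ()) (fun _ _ _ => Subsingleton.elim _ _)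
    hA' hlv'

theorem of_sigma_fst_eq {d : ℕ} {W : Type*} {L : W → Type*} [∀ w, Fintype (L w)]
    [∀ w, DecidableEq (L w)] {B : (w : W) → ℕ → L w → ℕ} {lvB : (w : W) → L w → ℕ}
    {w₀ : W} (hB : IsMOA (fun a : Fin d => B w₀ a) (lvB w₀) k)
    {κ' : Type*} [Fintype κ'] [DecidableEq κ'] {A' : Fin d → κ' → ℕ} {lv' : κ' → ℕ}
    {lab : κ' → Σ w, L w} (hlab : Function.Injective lab)
    (hfst : ∀ c, (lab c).1 = w₀) (hA' : ∀ a c, A' a c = B (lab c).1 a (lab c).2)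
    (hlv' : ∀ c, lv' c = lvB (lab c).1 (lab c).2) : IsMOA A' lv' k := by
  have hsigma : ∀ (F : (w : W) → L w → ℕ) (z : Σ w, L w) (h : z.1 = w₀),
      F z.1 z.2 = F w₀ (Equiv.sigmaSubtype w₀ ⟨z, h⟩) := by
    rintro F ⟨w, l⟩ rfl
    rfl
  refine hB.of_comp_injective (φ := fun c => Equiv.sigmaSubtype w₀ ⟨lab c, hfst c⟩)
    (fun c c' h => hlab (congrArg Subtype.val ((Equiv.sigmaSubtype w₀).injective h)))
    (fun a c => ?_) fun c => ?_
  · rw [hA']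
    exact hsigma (fun w l => B w a l) _ _
  · rw [hlv']
    exact hsigma lvB _ _

theorem keep_or_replace {d : ℕ} (hA : IsMOA A (fun _ => d) k)
    {κ₀ κ₁ W : Type*} [Fintype κ₀] [DecidableEq κ₀] [Fintype κ₁] [DecidableEq κ₁]
    {L Y : W → Type*} [∀ w, Fintype (L w)] [∀ w, DecidableEq (L w)]
    {B : (w : W) → ℕ → L w → ℕ} {lvB : (w : W) → L w → ℕ}
    (hB : ∀ w, IsMOA (fun a : Fin d => B w a) (lvB w) k)
    {place : κ₀ ⊕ (Σ w, Y w) → κ} (hplace : Function.Injective place)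
    {slot : κ₁ → Σ w, Y w} {lab : κ₁ → Σ w, L w} (hfst : ∀ c, (slot c).1 = (lab c).1)
    (hslot : ∀ c c', slot c = slot c' → lab c = lab c' → c = c') :
    IsMOA (fun i => Sum.elim (fun c => A i (place (.inl c)))
        fun c => B (lab c).1 (A i (place (.inr (slot c)))) (lab c).2)
      (Sum.elim (fun _ => d) fun c => lvB (lab c).1 (lab c).2) k := by
  let col : κ₀ ⊕ κ₁ → κ :=
    Sum.elim (fun c => place (.inl c)) fun c => place (.inr (slot c))
  let enc : κ₀ ⊕ κ₁ → ℕ → ℕ :=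
    Sum.elim (fun _ a => a) fun c a => B (lab c).1 a (lab c).2
  have hC : (fun i => Sum.elim (fun c => A i (place (.inl c)))
      fun c => B (lab c).1 (A i (place (.inr (slot c)))) (lab c).2)
      = fun i c => enc c (A i (col c)) := by
    funext i c; cases c <;> rfl
  rw [hC]
  refine hA.replace_columns col enc _ fun j => ?_
  by_cases hj : ∃ c₁, col (.inr c₁) = j
  · obtain ⟨c₁, rfl⟩ := hj
    have hfib : ∀ c, col c = col (.inr c₁) → ∃ e, c = .inr e ∧ slot e = slot c₁ := by
      rintro (c | c) hc
      · exact (Sum.inl_ne_inr (hplace hc)).elim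
      · exact ⟨c, rfl, Sum.inr_injective (hplace hc)⟩
    -- the value on `inl` is junk: this fibre consists of `inr` columns only
    let lab' : κ₀ ⊕ κ₁ → Σ w, L w := Sum.elim (fun _ => lab c₁) lab
    refine (hB (lab c₁).1).of_sigma_fst_eq (lab := fun c => lab' c) ?_ (fun c => ?_)
      (fun a c => ?_) (fun c => ?_)
    · rintro ⟨c, hc⟩ ⟨c', hc'⟩ h
      obtain ⟨e, rfl, hse⟩ := hfib c hc
      obtain ⟨e', rfl, hse'⟩ := hfib c' hc'
      obtain rfl := hslot e e' (hse.trans hse'.symm) h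
      rfl
    all_goals obtain ⟨c, hc⟩ := c; obtain ⟨e, rfl, hse⟩ := hfib c hc
    exacts [(hfst e).symm.trans (by rw [hse, hfst]), rfl, rfl]
  · have hfib : ∀ c, col c = j → ∃ e, c = .inl e ∧ place (.inl e) = j := by
      rintro (c | c) hc
      · exact ⟨c, rfl, hc⟩
      · exact absurd ⟨c, hc⟩ hj
    have : Subsingleton {c // col c = j} := ⟨fun ⟨c, hc⟩ ⟨c', hc'⟩ => by
      obtain ⟨e, rfl, hce⟩ := hfib c hc
      obtain ⟨e', rfl, hce'⟩ := hfib c' hc'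
      obtain rfl := Sum.inl_injective (hplace (hce.trans hce'.symm))
      rfl⟩
    refine of_subsingleton_columns (fun a c => ?_) fun c => ?_ <;>
      obtain ⟨c, hc⟩ := c <;> obtain ⟨e, rfl, -⟩ := hfib c hc <;> rfl

end IsMOA

theorem exists_injective_sum_of_card_eq_of_card_le {κ α β : Type*} [Fintype κ] [DecidableEq κ]
    [Fintype α] [Fintype β] (S : Finset κ) (hα : Fintype.card α = #S)
    (hβ : Fintype.card β ≤ #Sᶜ) :
    ∃ f : α ⊕ β → κ, Function.Injective f ∧ ∀ j ∈ S, ∃ a, f (.inl a) = j := by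
  obtain ⟨e₁⟩ : Nonempty (α ≃ S) := ⟨Fintype.equivOfCardEq (by rwa [Fintype.card_coe])⟩
  obtain ⟨e₂⟩ : Nonempty (β ↪ (Sᶜ : Finset κ)) :=
    Function.Embedding.nonempty_of_card_le (by rwa [Fintype.card_coe])
  refine ⟨Sum.elim (fun a => (e₁ a : κ)) (fun b => (e₂ b : κ)),
    (Subtype.val_injective.comp e₁.injective).sumElim (Subtype.val_injective.comp e₂.injective)
      fun a b h => ?_, fun j hj => ⟨e₁.symm ⟨j, hj⟩, by simp⟩⟩
  have hb := (e₂ b).2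
  rw [mem_compl, ← h] at hb
  exact hb (e₁ a).2

theorem exists_injective_sum_sigma_sum {κ α W : Type*} [Fintype κ] [DecidableEq κ] [Fintype α]
    [Fintype W] {U V : W → Type*} [∀ w, Fintype (U w)] [∀ w, Fintype (V w)] (S : Finset κ)
    (hU : Fintype.card α + ∑ w, Fintype.card (U w) = #S)
    (hV : ∑ w, Fintype.card (V w) ≤ #Sᶜ) :
    ∃ place : α ⊕ (Σ w, U w ⊕ V w) → κ, Function.Injective place ∧
      ∀ j ∈ S, (∃ a, place (.inl a) = j) ∨ ∃ w e, place (.inr ⟨w, .inl e⟩) = j := by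
  obtain ⟨f, hf, hfS⟩ := exists_injective_sum_of_card_eq_of_card_le
    (α := α ⊕ Σ w, U w) (β := Σ w, V w) S (by simpa using hU) (by simpa using hV)
  refine ⟨f ∘ (Equiv.sumCongr (Equiv.refl _) (Equiv.sigmaSumDistrib _ _)).trans
    (Equiv.sumAssoc _ _ _).symm, hf.comp (Equiv.injective _), fun j hj => ?_⟩
  obtain ⟨a | ⟨w, e⟩, rfl⟩ := hfS j hj
  exacts [.inl ⟨a, rfl⟩, .inr ⟨w, e, rfl⟩]

theorem sigma_sigma_eq_of_embedding {W : Type*} {I Y : W → Type*} {E : (w : W) → I w → Type*}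
    (φ : ∀ w i, E w i ↪ Y w) {p p' : Σ w, Σ i, E w i}
    (h : (⟨p.1, φ _ _ p.2.2⟩ : Σ w, Y w) = ⟨p'.1, φ _ _ p'.2.2⟩)
    (h' : (⟨p.1, p.2.1⟩ : Σ w, I w) = ⟨p'.1, p'.2.1⟩) : p = p' := by
  obtain ⟨w, i, e⟩ := p
  obtain ⟨w', i', e'⟩ := p'
  cases h'
  obtain rfl := (φ w i).injective (eq_of_heq (Sigma.mk.inj_iff.mp h).2)
  rfl

theorem statement14_general {r N d k s t : ℕ} (hs : s ≤ N)
    (A : Fin r → Fin N → ℕ) (hA : IsMOA A (fun _ => d) k)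
    (S : Finset (Fin N)) (hScard : S.card = N - s)
    (hSMD : k + 1 ≤ minDist (fun i (j : S) => A i j.1))
    (m : Fin t → ℕ)
    (B : (w : Fin t) → ℕ → Fin (m w) → ℕ)
    (Blv : (w : Fin t) → Fin (m w) → ℕ)
    (hB : ∀ w, IsMOA (fun a : Fin d => B w a.val) (Blv w) k)
    (hBMD : ∀ w, 1 ≤ minDist (fun a : Fin d => B w a.val))
    (u : Fin t → ℕ) (huN : ∑ w, u w ≤ N - s)
    (n : Fin t → ℕ) (hns : ∑ w, n w ≤ s)
    (v : (w : Fin t) → Fin (m w) → ℕ) (hv : ∀ w i, v w i ≤ n w) :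
    ∃ C : Fin r →
        (Fin (N - s - ∑ w, u w) ⊕ (Σ w : Fin t, Σ i : Fin (m w), Fin (u w + v w i))) → ℕ,
      IsIrMOA C (Sum.elim (fun _ => d) fun p => Blv p.1 p.2.1) k := by
  obtain ⟨place, hplace, hplaceS⟩ := exists_injective_sum_sigma_sum
    (α := Fin (N - s - ∑ w, u w)) (U := fun w => Fin (u w)) (V := fun w => Fin (n w)) S
    (by simp; omega) (by simp [card_compl, hScard]; omega)
  -- column `e` of block `(w, i)` sits in the `e`-th column of `S` reserved for `w` if `e < u w`,
  -- and in the `(e - u w)`-th column outside `S` reserved for `w` otherwise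
  let φ (w : Fin t) (i : Fin (m w)) : Fin (u w + v w i) ↪ Fin (u w) ⊕ Fin (n w) :=
    finSumFinEquiv.symm.toEmbedding.trans
      (Function.Embedding.sumMap (Function.Embedding.refl _) (Fin.castLEEmb (hv w i)))
  let slot (p : Σ w, Σ i : Fin (m w), Fin (u w + v w i)) : Σ w, Fin (u w) ⊕ Fin (n w) :=
    ⟨p.1, φ _ _ p.2.2⟩
  refine ⟨_, hA.keep_or_replace hB hplace (slot := slot) (lab := fun p => ⟨p.1, p.2.1⟩)
    (fun _ => rfl) fun _ _ => sigma_sigma_eq_of_embedding φ, fun i i' hii' => ?_⟩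
  calc k + 1 ≤ minDist (fun i (j : S) => A i j.1) := hSMD
    _ ≤ hamDist (fun i (j : S) => A i j.1) i i' := minDist_le_hamDist _ hii'
    _ = #{j ∈ S | A i j ≠ A i' j} := hamDist_subtype A S i i'
    _ ≤ _ := card_filter_ne_le_hamDist (Sum.elim (fun c => place (.inl c))
        fun p => place (.inr (slot p))) fun j hj hne => ?_
  obtain ⟨c, rfl⟩ | ⟨w, e, rfl⟩ := hplaceS j hj
  · exact ⟨.inl c, rfl, hne⟩
  · obtain ⟨l, hl⟩ := exists_ne_of_one_le_minDist (hBMD w)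
      (i := ⟨A i _, hA.1 i _⟩) (i' := ⟨A i' _, hA.1 i' _⟩) (by simpa using hne)
    exact ⟨.inr ⟨w, l, Fin.castAdd (v w l) e⟩, by simp [slot, φ],
      by simpa [slot, φ] using hl⟩

/-- Let `A = OA(r, N, d, k)` such that some `N − s` of its
columns (a set `S`) form a subarray with minimum Hamming distance `≥ k+1`, and
for `w = 1,…,t` let `B w` be an MOA of strength `k` with `d` rows, `m w`
columns and levels `Blv w`, with `MD(B w) ≥ 1`. Then for all `u₁,…,u_t ≥ 0`
with `1 ≤ u₁+⋯+u_t ≤ N − s`, all `n₁,…,n_t ≥ 0` with `1 ≤ n₁+⋯+n_t ≤ s`, and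
all `v_{iw} ≤ n_w`, there is an irredundant MOA of strength `k` with `r` rows,
`N − s − (u₁+⋯+u_t)` columns of `d` levels and, for each `w, i`, exactly
`u w + v w i` columns of `Blv w i` levels. -/
theorem statement14 {r N d k s t : ℕ} (hs : s ≤ N)
    (A : Fin r → Fin N → ℕ) (hA : IsMOA A (fun _ => d) k)
    (S : Finset (Fin N)) (hScard : S.card = N - s)
    (hSMD : k + 1 ≤ minDist (fun i (j : S) => A i j.1))
    (m : Fin t → ℕ)
    (B : (w : Fin t) → ℕ → Fin (m w) → ℕ)
    (Blv : (w : Fin t) → Fin (m w) → ℕ)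
    (hB : ∀ w, IsMOA (fun a : Fin d => B w a.val) (Blv w) k)
    (hBMD : ∀ w, 1 ≤ minDist (fun a : Fin d => B w a.val))
    (u : Fin t → ℕ) (hu1 : 1 ≤ ∑ w, u w) (huN : ∑ w, u w ≤ N - s)
    (n : Fin t → ℕ) (hn1 : 1 ≤ ∑ w, n w) (hns : ∑ w, n w ≤ s)
    (v : (w : Fin t) → Fin (m w) → ℕ) (hv : ∀ w i, v w i ≤ n w) :
    ∃ C : Fin r →
        (Fin (N - s - ∑ w, u w) ⊕ (Σ w : Fin t, Σ i : Fin (m w), Fin (u w + v w i))) → ℕ,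
      IsIrMOA C (Sum.elim (fun _ => d) fun p => Blv p.1 p.2.1) k :=
  statement14_general hs A hA S hScard hSMD m B Blv hB hBMD u huN n hns v hv
end

section
/- Let D be a difference scheme D(N, M, d) and let B be a mixed orthogonal array MOA(N, m, p₁¹p₂¹⋯p_m¹, 2) (B has N rows). Let A₂ = D ⊕ (d) be the dN × M array whose row indexed by (i, g) ∈ {1,…,N} × ℤ_d has entries D(i,1)+g, …, D(i,M)+g. If MD(A₂) ≥ 3, then there exists an irredundant mixed orthogonal array IrMOA(dN, M+m, d^M p₁¹p₂¹⋯p_m¹, 2). -/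
open Finset

/-!
Row `(i, g)` of the new array is the developed row `D(i, ·) + g` followed by row `i` of `B`.
As soon as a constraint involves a column of `D`, the symbol prescribed there determines `g`
from `i`; the count over rows `(i, g)` then collapses to a count over `i` alone, which the
difference scheme (two columns of `D`) or the orthogonality of `B` (one column of each) controls.
Constraints on `B`-columns only leave `g` free and gain a factor `d`. Appending columns never
decreases Hamming distances, so `MD(A₂) ≥ 3` gives irredundancy.
-/

lemma ZMod.val_eq_iff_eq_natCast {d : ℕ} [NeZero d] {a : ZMod d} {x : ℕ} (hx : x < d) :
    a.val = x ↔ a = x := by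
  constructor
  · rintro rfl
    exact (ZMod.natCast_zmod_val a).symm
  · rintro rfl
    exact ZMod.val_natCast_of_lt hx

section Counting

variable {α β : Type*} [Fintype α] [Fintype β] (P : α → Prop) [DecidablePred P]

lemma card_filter_fst_prod :
    #{p : α × β | P p.1} = #{i | P i} * Fintype.card β := by
  rw [← card_univ, ← card_product, ← filter_product_left, univ_product_univ]

lemma card_filter_and_add_eq [AddGroup β] [DecidableEq β] (f : α → β) (a : β) :
    #{p : α × β | P p.1 ∧ f p.1 + p.2 = a} = #{i | P i} := by
  refine card_nbij' Prod.fst (fun i => (i, -f i + a)) ?_ ?_ ?_ ?_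
  all_goals
    intro p hp
    simp only [coe_filter, mem_univ, true_and, Set.mem_ofPred_eq] at hp ⊢
  · exact hp.1
  · simpa using hp
  · ext
    · rfl
    · simp [← hp.2]

end Counting

section Hamming

variable {ι κ κ' : Type*} [Fintype κ] [Fintype κ']

lemma le_hamDist_of_le_minDist {A : ι → κ → ℕ} {n : ℕ} (h : n ≤ minDist A) {i i' : ι}
    (hii' : i ≠ i') : n ≤ hamDist A i i' :=
  h.trans (Nat.sInf_le ⟨i, i', hii', rfl⟩)

lemma hamDist_le_hamDist_sumElim (A : ι → κ → ℕ) (B : ι → κ' → ℕ) (i i' : ι) :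
    hamDist A i i' ≤ hamDist (fun i => Sum.elim (A i) (B i)) i i' :=
  card_le_card_of_injOn Sum.inl (by simp [Set.MapsTo]) Sum.inl_injective.injOn

end Hamming

section StrengthTwo

variable {ι κ : Type*} [Fintype ι] [Fintype κ] [DecidableEq κ] {A : ι → κ → ℕ} {lv : κ → ℕ}
  {k : ℕ}

lemma IsMOA.card_filter_mul_eq (h : IsMOA A lv k) (hk : 1 ≤ k) {j : κ} {x : ℕ}
    (hx : x < lv j) : #{i | A i j = x} * lv j = Fintype.card ι := by
  simpa using h.2 {j} (by simpa using hk) (fun _ => x) (by simpa using hx)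

lemma IsMOA.card_filter_and_mul_eq (h : IsMOA A lv k) (hk : 2 ≤ k) {j j' : κ} (hjj' : j ≠ j')
    {x x' : ℕ} (hx : x < lv j) (hx' : x' < lv j') :
    #{i | A i j = x ∧ A i j' = x'} * (lv j * lv j') = Fintype.card ι := by
  have := h.2 {j, j'} ((card_le_two).trans hk) (fun t => if t = j then x else x')
    (by simp [hjj'.symm, hx, hx'])
  simpa [prod_pair hjj', hjj'.symm] using this

lemma isMOA_two_of_card (hlt : ∀ i j, A i j < lv j)
    (h₁ : ∀ j x, x < lv j → #{i | A i j = x} * lv j = Fintype.card ι)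
    (h₂ : ∀ j j', j ≠ j' → ∀ x x', x < lv j → x' < lv j' →
      #{i | A i j = x ∧ A i j' = x'} * (lv j * lv j') = Fintype.card ι) :
    IsMOA A lv 2 := by
  refine ⟨hlt, fun S hS x hx => ?_⟩
  interval_cases hc : S.card
  · simp [card_eq_zero.mp hc]
  · obtain ⟨j, rfl⟩ := card_eq_one.mp hc
    simpa using h₁ j (x j) (by simpa using hx)
  · obtain ⟨j, j', hjj', rfl⟩ := card_eq_two.mp hc
    simpa [prod_pair hjj'] using h₂ j j' hjj' (x j) (x j') (hx j (by simp)) (hx j' (by simp))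

end StrengthTwo

section Construction

variable {N M d : ℕ} {κ : Type*} (D : Fin N → Fin M → ZMod d) (B : Fin N → κ → ℕ)

/-- The paper's `A₂ = D ⊕ (d)`. -/
def develop : Fin N × ZMod d → Fin M → ℕ := fun p j => (D p.1 j + p.2).val

def developAppend : Fin N × ZMod d → Fin M ⊕ κ → ℕ := fun p => Sum.elim (develop D p) (B p.1)

@[simp]
lemma developAppend_inl (p : Fin N × ZMod d) (j : Fin M) :
    developAppend D B p (.inl j) = develop D p j :=
  Sum.elim_inl _ _ _

@[simp]
lemma developAppend_inr (p : Fin N × ZMod d) (j : κ) : developAppend D B p (.inr j) = B p.1 j :=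
  Sum.elim_inr _ _ _

variable [NeZero d]

lemma card_filter_and_develop_eq (P : Fin N → Prop) [DecidablePred P] (j : Fin M) {x : ℕ}
    (hx : x < d) : #{p | P p.1 ∧ develop D p j = x} = #{i | P i} := by
  simp only [develop, ZMod.val_eq_iff_eq_natCast hx]
  exact card_filter_and_add_eq P (D · j) x

lemma card_filter_develop_eq_and_develop_eq {j j' : Fin M} (hjj' : j ≠ j') (hD : IsDiffScheme D)
    {x x' : ℕ} (hx : x < d) (hx' : x' < d) :
    #{p | develop D p j = x ∧ develop D p j' = x'} * (d * d) = N * d := by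
  have hiff : ∀ p : Fin N × ZMod d, develop D p j = x ∧ develop D p j' = x' ↔
      D p.1 j - D p.1 j' = (x - x' : ZMod d) ∧ develop D p j = x := by
    intro p
    simp only [develop, ZMod.val_eq_iff_eq_natCast hx, ZMod.val_eq_iff_eq_natCast hx']
    constructor
    · rintro ⟨h, h'⟩
      exact ⟨by linear_combination h - h', h⟩
    · rintro ⟨hdiff, h⟩
      exact ⟨h, by linear_combination h - hdiff⟩
  simp only [hiff]
  rw [card_filter_and_develop_eq D (fun i => D i j - D i j' = (x - x' : ZMod d)) j hx,
    ← mul_assoc, hD j j' hjj']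

variable {D B} [Fintype κ] [DecidableEq κ] {plv : κ → ℕ}

lemma isMOA_developAppend (hD : IsDiffScheme D) (hB : IsMOA B plv 2) :
    IsMOA (developAppend D B) (Sum.elim (fun _ => d) plv) 2 := by
  have hcard : Fintype.card (Fin N × ZMod d) = Fintype.card (Fin N) * d := by simp
  refine isMOA_two_of_card ?_ ?_ ?_
  · rintro p (j | j)
    · exact ZMod.val_lt _
    · exact hB.1 p.1 j
  · rintro (j | j) x hx <;>
      simp only [developAppend_inl, developAppend_inr, Sum.elim_inl, Sum.elim_inr] at hx ⊢
    · have := card_filter_and_develop_eq D (fun _ => True) j hx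
      simp only [true_and, filter_true] at this
      rw [this, hcard, card_univ]
    · rw [card_filter_fst_prod (fun i => B i j = x), hcard, ZMod.card, mul_right_comm,
        hB.card_filter_mul_eq one_le_two hx]
  · rintro (j | j) (j' | j') hjj' x x' hx hx' <;>
      simp only [developAppend_inl, developAppend_inr, Sum.elim_inl, Sum.elim_inr, ne_eq,
        Sum.inl.injEq, Sum.inr.injEq] at hx hx' hjj' ⊢
    · rw [hcard, card_filter_develop_eq_and_develop_eq D hjj' hD hx hx', Fintype.card_fin]
    · simp only [and_comm (a := develop D _ j = x)]
      rw [card_filter_and_develop_eq D (fun i => B i j' = x') j hx, hcard, mul_left_comm,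
        hB.card_filter_mul_eq one_le_two hx', mul_comm]
    · rw [card_filter_and_develop_eq D (fun i => B i j = x) j' hx', hcard, ← mul_assoc,
        hB.card_filter_mul_eq one_le_two hx]
    · rw [card_filter_fst_prod (fun i => B i j = x ∧ B i j' = x'), hcard, ZMod.card,
        mul_right_comm, hB.card_filter_and_mul_eq le_rfl hjj' hx hx']

end Construction

/-- Let `D` be a difference scheme `D(N, M, d)` and `B` an
`MOA(N, m, p₁¹⋯p_m¹, 2)`. Let `A₂ = D ⊕ (d)` be the `dN × M` developed array,
whose row indexed by `(i, g) ∈ Fin N × ℤ_d` has entries `D(i,j) + g`. If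
`MD(A₂) ≥ 3`, then there exists an irredundant mixed orthogonal array
`IrMOA(dN, M+m, d^M p₁¹⋯p_m¹, 2)`. -/
theorem statement17 {N M m d : ℕ} [NeZero d]
    (D : Fin N → Fin M → ZMod d) (hD : IsDiffScheme D)
    (plv : Fin m → ℕ) (B : Fin N → Fin m → ℕ) (hB : IsMOA B plv 2)
    (hMDA₂ : 3 ≤ minDist
      (fun p : Fin N × ZMod d => fun j : Fin M => (D p.1 j + p.2).val)) :
    ∃ C : Fin N × ZMod d → (Fin M ⊕ Fin m) → ℕ,
      IsIrMOA C (Sum.elim (fun _ => d) plv) 2 :=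
  ⟨developAppend D B, isMOA_developAppend hD hB, fun _ _ hpq =>
    (le_hamDist_of_le_minDist (A := develop D) hMDA₂ hpq).trans
      (hamDist_le_hamDist_sumElim _ _ _ _)⟩
end

section
/- Let d₁, d₂, d₃, d₄, d₅ be integers, each at least 2, which are not all equal and such that any two distinct values among them are coprime (gcd(d_i, d_j) = 1 whenever d_i ≠ d_j). If an irredundant mixed orthogonal array IrMOA(r, 5, d₁¹d₂¹d₃¹d₄¹d₅¹, 2) exists, then there are integers a < b such that the multiset {d₁, d₂, d₃, d₄, d₅} equals {a, b, b, b, b}; in particular, no IrMOA(r, 5, d₁¹d₂¹d₃¹d₄¹d₅¹, 2) exists whose multiset of levels has the pattern a¹b⁴ with a > b, a²b³, a²b²c¹, a³b¹c¹, a²b¹c¹e¹, or a¹b¹c¹e¹f¹ (with a, b, c, e, f pairwise distinct). -/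
open Finset

lemma pairDvd {r : ℕ} {A : Fin r → Fin 5 → ℕ} {d : Fin 5 → ℕ} (h2 : ∀ i, 2 ≤ d i)
    (hM : IsMOA A d 2) {i j : Fin 5} (hij : i ≠ j) : d i * d j ∣ r := by
  obtain ⟨_, hc⟩ := hM
  have hcard : ({i, j} : Finset (Fin 5)).card ≤ 2 := by
    rw [Finset.card_pair hij]
  have h := hc {i, j} hcard (fun _ => 0)
    (fun j' _ => lt_of_lt_of_le (by norm_num) (h2 j'))
  rw [Finset.prod_pair hij, Fintype.card_fin] at h
  exact ⟨_, by rw [← h, mul_comm]⟩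

lemma tripleLe {r : ℕ} {A : Fin r → Fin 5 → ℕ} {d : Fin 5 → ℕ}
    (hb : ∀ x j, A x j < d j) (hdist : ∀ x y : Fin r, x ≠ y → 2 + 1 ≤ hamDist A x y)
    {i j k : Fin 5} (hij : i ≠ j) (hik : i ≠ k) (hjk : j ≠ k) :
    r ≤ d i * d j * d k := by
  have hinj : Function.Injective (fun x : Fin r =>
      ((⟨A x i, hb x i⟩ : Fin (d i)), (⟨A x j, hb x j⟩ : Fin (d j)),
        (⟨A x k, hb x k⟩ : Fin (d k)))) := by
    intro x y hxy
    by_contra hne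
    have h3 := hdist x y hne
    simp only [Prod.mk.injEq, Fin.mk.injEq] at hxy
    obtain ⟨e1, e2, e3⟩ := hxy
    have hsub : (Finset.univ.filter fun c => A x c ≠ A y c) ⊆
        ({i, j, k} : Finset (Fin 5))ᶜ := by
      intro c hc
      simp only [Finset.mem_filter] at hc
      simp only [Finset.mem_compl, Finset.mem_insert, Finset.mem_singleton]
      rintro (rfl | rfl | rfl) <;> exact hc.2 (by assumption)
    have hcard : (({i, j, k} : Finset (Fin 5))ᶜ).card = 2 := by
      rw [Finset.card_compl,
        Finset.card_insert_of_notMem (by simp [hij, hik]),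
        Finset.card_insert_of_notMem (by simp [hjk]), Finset.card_singleton]
      rfl
    have hle := Finset.card_le_card hsub
    unfold hamDist at h3
    omega
  calc r = Fintype.card (Fin r) := (Fintype.card_fin r).symm
    _ ≤ Fintype.card (Fin (d i) × Fin (d j) × Fin (d k)) :=
        Fintype.card_le_of_injective _ hinj
    _ = d i * d j * d k := by simp [mul_assoc]

/-- Let `d₁,…,d₅ ≥ 2` be integers, not all equal, such that
any two distinct values among them are coprime. If an irredundant mixed
orthogonal array `IrMOA(r, 5, d₁¹d₂¹d₃¹d₄¹d₅¹, 2)` exists (with `r ≥ 1`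
rows), then the multiset `{d₁, d₂, d₃, d₄, d₅}` is of the form
`{a, b, b, b, b}` with `a < b`. -/
theorem statement19 (d : Fin 5 → ℕ) (h2 : ∀ i, 2 ≤ d i)
    (hne : ¬ ∀ i j, d i = d j)
    (hcop : ∀ i j, d i ≠ d j → Nat.Coprime (d i) (d j))
    (hex : ∃ (r : ℕ) (A : Fin r → Fin 5 → ℕ), 0 < r ∧ IsIrMOA A d 2) :
    ∃ a b : ℕ, a < b ∧
      Multiset.map d Finset.univ.val = ({a, b, b, b, b} : Multiset ℕ) := by
  obtain ⟨r, A, hr, hM, hdist⟩ := hex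
  have hb := hM.1
  have hP : ∀ {i j : Fin 5}, i ≠ j → d i * d j ∣ r := fun hij => pairDvd h2 hM hij
  have hT : ∀ {i j k : Fin 5}, i ≠ j → i ≠ k → j ≠ k → r ≤ d i * d j * d k :=
    fun hij hik hjk => tripleLe hb hdist hij hik hjk
  -- Step C: some value repeats
  have hrep : ∃ i j : Fin 5, i ≠ j ∧ d i = d j := by
    by_contra h
    push_neg at h
    have hdd : ∀ i j : Fin 5, i ≠ j → d i ≠ d j := h
    have c02 := hcop 0 2 (hdd 0 2 (by decide))
    have c03 := hcop 0 3 (hdd 0 3 (by decide))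
    have c12 := hcop 1 2 (hdd 1 2 (by decide))
    have c13 := hcop 1 3 (hdd 1 3 (by decide))
    have hcp : Nat.Coprime (d 0 * d 1) (d 2 * d 3) :=
      Nat.Coprime.mul (c02.mul_right c03) (c12.mul_right c13)
    have hdvd : (d 0 * d 1) * (d 2 * d 3) ∣ r :=
      hcp.mul_dvd_of_dvd_of_dvd (hP (by decide)) (hP (by decide))
    have hle : (d 0 * d 1) * (d 2 * d 3) ≤ d 0 * d 1 * d 2 :=
      le_trans (Nat.le_of_dvd hr hdvd) (hT (by decide) (by decide) (by decide))
    have h' : (d 0 * d 1 * d 2) * d 3 ≤ (d 0 * d 1 * d 2) * 1 := by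
      rw [mul_one]
      calc (d 0 * d 1 * d 2) * d 3 = (d 0 * d 1) * (d 2 * d 3) := by ring
        _ ≤ d 0 * d 1 * d 2 := hle
    have hpos : 0 < d 0 * d 1 * d 2 :=
      Nat.mul_pos (Nat.mul_pos (lt_of_lt_of_le two_pos (h2 0))
        (lt_of_lt_of_le two_pos (h2 1))) (lt_of_lt_of_le two_pos (h2 2))
    have := Nat.le_of_mul_le_mul_left h' hpos
    have := h2 3
    omega
  -- Rep lemma
  have hRep : ∀ i j k : Fin 5, i ≠ j → d i = d j → d k ≠ d i →
      r = d i * d i * d k := by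
    intro i j k hij hdij hdk
    have hki : k ≠ i := fun h => hdk (h ▸ rfl)
    have hkj : k ≠ j := fun h => hdk (by rw [h, ← hdij])
    have h1 : d i * d i ∣ r := by
      have := hP hij; rwa [← hdij] at this
    have h2' : d k ∣ r := dvd_trans (dvd_mul_left _ _) (hP hki.symm)
    have hcp : Nat.Coprime (d i * d i) (d k) :=
      Nat.Coprime.mul (hcop i k (Ne.symm hdk)) (hcop i k (Ne.symm hdk))
    have hdvd : d i * d i * d k ∣ r := hcp.mul_dvd_of_dvd_of_dvd h1 h2'
    have hle : r ≤ d i * d i * d k := by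
      have := hT hij hki.symm hkj.symm
      rwa [← hdij] at this
    exact le_antisymm hle (Nat.le_of_dvd hr hdvd)
  obtain ⟨i, j, hij, hdij⟩ := hrep
  have hkex : ∃ k, d k ≠ d i := by
    by_contra h
    push_neg at h
    exact hne fun p q => by rw [h p, h q]
  obtain ⟨k, hk⟩ := hkex
  have hrk : r = d i * d i * d k := hRep i j k hij hdij hk
  have huniq : ∀ m, d m ≠ d i → d m = d k := by
    intro m hm
    have hm' := hRep i j m hij hdij hm
    have : d i * d i * d k = d i * d i * d m := by rw [← hrk, hm']
    exact (Nat.eq_of_mul_eq_mul_left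
      (Nat.mul_pos (lt_of_lt_of_le two_pos (h2 i)) (lt_of_lt_of_le two_pos (h2 i))) this).symm
  have honlyk : ∀ m, m ≠ k → d m = d i := by
    intro m hmk
    by_contra hm
    have hmb : d m = d k := huniq m hm
    have h2r : r = d k * d k * d i := hRep k m i hmk.symm hmb.symm (Ne.symm hk)
    have hcomb : d i * d i * d k = d k * d k * d i := by rw [← hrk, h2r]
    have e : (d i * d k) * d i = (d i * d k) * d k := by
      calc (d i * d k) * d i = d i * d i * d k := by ring
        _ = d k * d k * d i := hcomb
        _ = (d i * d k) * d k := by ring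
    exact hk ((Nat.eq_of_mul_eq_mul_left
      (Nat.mul_pos (lt_of_lt_of_le two_pos (h2 i)) (lt_of_lt_of_le two_pos (h2 k))) e).symm)
  have hki : k ≠ i := fun h => hk (by rw [h])
  have hkj : k ≠ j := fun h => hk (by rw [h, ← hdij])
  have hmex : ∃ m : Fin 5, m ≠ i ∧ m ≠ j ∧ m ≠ k := by
    by_contra h
    push_neg at h
    have hsub : (Finset.univ : Finset (Fin 5)) ⊆ {i, j, k} := by
      intro m _
      simp only [mem_insert, mem_singleton]
      by_cases h1 : m = i
      · exact Or.inl h1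
      by_cases h2 : m = j
      · exact Or.inr (Or.inl h2)
      exact Or.inr (Or.inr (h m h1 h2))
    have hc1 := Finset.card_le_card hsub
    have hc2 : ({i, j, k} : Finset (Fin 5)).card ≤ 3 :=
      le_trans (Finset.card_insert_le _ _)
        (Nat.succ_le_succ (le_trans (Finset.card_insert_le _ _)
          (by simp)))
    simp only [Finset.card_univ, Fintype.card_fin] at hc1
    omega
  obtain ⟨m, hmi, hmj, hmk⟩ := hmex
  have hdm : d m = d i := honlyk m hmk
  have hlt : d k < d i := by
    have hle : r ≤ d i * d j * d m := hT hij hmi.symm hmj.symm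
    rw [← hdij, hdm, hrk] at hle
    have hpos : 0 < d i * d i :=
      Nat.mul_pos (lt_of_lt_of_le two_pos (h2 i)) (lt_of_lt_of_le two_pos (h2 i))
    exact lt_of_le_of_ne (Nat.le_of_mul_le_mul_left hle hpos) hk
  refine ⟨d k, d i, hlt, ?_⟩
  have hkmem : k ∈ (Finset.univ : Finset (Fin 5)).val := Finset.mem_univ k
  have huval : (Finset.univ : Finset (Fin 5)).val = k ::ₘ Finset.univ.val.erase k :=
    (Multiset.cons_erase hkmem).symm
  rw [huval, Multiset.map_cons]
  have hrest : Multiset.map d (Finset.univ.val.erase k) = Multiset.replicate 4 (d i) := by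
    apply Multiset.eq_replicate.2
    constructor
    · rw [Multiset.card_map, Multiset.card_erase_of_mem hkmem]
      simp
    · intro b hb
      obtain ⟨m', hm', rfl⟩ := Multiset.mem_map.1 hb
      have hne' : m' ≠ k :=
        ((Multiset.Nodup.mem_erase_iff (Finset.univ : Finset (Fin 5)).nodup).1 hm').1
      exact honlyk m' hne'
  rw [hrest]
  rfl
end
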